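/- Fix integers n ≥ 2, g ≥ 1, p ≥ 1. In the presented group G(n,g,p), set β = σ_{n−1}⋯σ_2σ_1²σ_2⋯σ_{n−1} and γ = σ_{n−1}⁻¹⋯σ_2⁻¹σ_1²σ_2⋯σ_{n−1}. Then for every 1 ≤ r ≤ g the following conjugation identities hold: a_rτ_1a_r⁻¹ = (βω_{2r−1}⁻¹)·γ·(βω_{2r−1}⁻¹)⁻¹ and b_rτ_1b_r⁻¹ = (βω_{2r}⁻¹)·γ·(βω_{2r}⁻¹)⁻¹. -/

import Mathlib

/-!
With `s = σ_1`, `R = σ_{n-1} ⋯ σ_2` and `U = σ_2 ⋯ σ_{n-1}` one has `τ_1 = R s² R⁻¹`,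
`β = R s² U`, `γ = U⁻¹ s² U` and `ω = (s U)⁻¹ x (s U)` for `x = a_r, b_r`, so the right-hand side
collapses to `R (s x⁻¹ s² x s⁻¹) R⁻¹`. Since `x` commutes with `R` by (R1), everything reduces
to the identity `x s² x⁻¹ = s x⁻¹ s² x s⁻¹`, a consequence of (R2) alone.
-/

/-- The generators of the presentation of the braid group of a punctured genus-`g`
surface: `s i` is `σ_{i+1}`, `a r` is `a_{r+1}`, `b r` is `b_{r+1}`, `z j` is `z_{j+1}`. -/
inductive GGen (n g p : ℕ) : Type
  | s : Fin (n - 1) → GGen n g p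
  | a : Fin g → GGen n g p
  | b : Fin g → GGen n g p
  | z : Fin (p - 1) → GGen n g p

/-- `σ_{i+1}` as an element of the free group. -/
def sg {n g p : ℕ} (i : Fin (n - 1)) : FreeGroup (GGen n g p) := FreeGroup.of (GGen.s i)

/-- `hgen true r = a_{r+1}` and `hgen false r = b_{r+1}`. -/
def hgen {n g p : ℕ} (c : Bool) (r : Fin g) : FreeGroup (GGen n g p) :=
  FreeGroup.of (if c then GGen.a r else GGen.b r)

/-- `z_{j+1}` as an element of the free group. -/
def zg {n g p : ℕ} (j : Fin (p - 1)) : FreeGroup (GGen n g p) := FreeGroup.of (GGen.z j)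

/-- The relators of the presentation `G(n, g, p)` of the braid group on `n` strings of an
orientable `p`-punctured surface of genus `g` (Theorem 1.1).  A relation `u = v` is
encoded as the relator `u * v⁻¹`; relations involving `σ_1` are guarded by `0 < n - 1`,
i.e. by `n > 1`. -/
def gRels (n g p : ℕ) : Set (FreeGroup (GGen n g p)) :=
  {r | -- braid relations
      (∃ i j : Fin (n - 1), (i : ℕ) + 1 = (j : ℕ) ∧
        r = sg i * sg j * sg i * (sg j * sg i * sg j)⁻¹)
    ∨ (∃ i j : Fin (n - 1), ((i : ℕ) + 2 ≤ (j : ℕ) ∨ (j : ℕ) + 2 ≤ (i : ℕ)) ∧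
        r = sg i * sg j * (sg j * sg i)⁻¹)
    -- (R1)  a_r σ_i = σ_i a_r ,  b_r σ_i = σ_i b_r  (i ≠ 1)
    ∨ (∃ (c : Bool) (t : Fin g) (i : Fin (n - 1)), (i : ℕ) ≠ 0 ∧
        r = hgen c t * sg i * (sg i * hgen c t)⁻¹)
    -- (R2)  σ_1⁻¹ x σ_1⁻¹ x = x σ_1⁻¹ x σ_1⁻¹  for  x = a_r, b_r
    ∨ (∃ (h : 0 < n - 1) (c : Bool) (t : Fin g),
        r = (sg ⟨0, h⟩)⁻¹ * hgen c t * (sg ⟨0, h⟩)⁻¹ * hgen c t *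
          (hgen c t * (sg ⟨0, h⟩)⁻¹ * hgen c t * (sg ⟨0, h⟩)⁻¹)⁻¹)
    -- (R3)  σ_1⁻¹ x_s σ_1 y_r = y_r σ_1⁻¹ x_s σ_1  (s < r, x, y ∈ {a, b})
    ∨ (∃ (h : 0 < n - 1) (c d : Bool) (s t : Fin g), (s : ℕ) < (t : ℕ) ∧
        r = (sg ⟨0, h⟩)⁻¹ * hgen c s * sg ⟨0, h⟩ * hgen d t *
          (hgen d t * (sg ⟨0, h⟩)⁻¹ * hgen c s * sg ⟨0, h⟩)⁻¹)
    -- (R4)  σ_1⁻¹ a_r σ_1⁻¹ b_r = b_r σ_1⁻¹ a_r σ_1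
    ∨ (∃ (h : 0 < n - 1) (t : Fin g),
        r = (sg ⟨0, h⟩)⁻¹ * hgen true t * (sg ⟨0, h⟩)⁻¹ * hgen false t *
          (hgen false t * (sg ⟨0, h⟩)⁻¹ * hgen true t * sg ⟨0, h⟩)⁻¹)
    -- (R5)  z_j σ_i = σ_i z_j  (i ≠ 1)
    ∨ (∃ (i : Fin (n - 1)) (j : Fin (p - 1)), (i : ℕ) ≠ 0 ∧
        r = zg j * sg i * (sg i * zg j)⁻¹)
    -- (R6)  σ_1⁻¹ z_j σ_1 x_t = x_t σ_1⁻¹ z_j σ_1  (x ∈ {a, b}, n > 1)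
    ∨ (∃ (h : 0 < n - 1) (c : Bool) (t : Fin g) (j : Fin (p - 1)),
        r = (sg ⟨0, h⟩)⁻¹ * zg j * sg ⟨0, h⟩ * hgen c t *
          (hgen c t * (sg ⟨0, h⟩)⁻¹ * zg j * sg ⟨0, h⟩)⁻¹)
    -- (R7)  σ_1⁻¹ z_j σ_1 z_l = z_l σ_1⁻¹ z_j σ_1  (j < l)
    ∨ (∃ (h : 0 < n - 1) (j l : Fin (p - 1)), (j : ℕ) < (l : ℕ) ∧
        r = (sg ⟨0, h⟩)⁻¹ * zg j * sg ⟨0, h⟩ * zg l *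
          (zg l * (sg ⟨0, h⟩)⁻¹ * zg j * sg ⟨0, h⟩)⁻¹)
    -- (R8)  σ_1⁻¹ z_j σ_1⁻¹ z_j = z_j σ_1⁻¹ z_j σ_1⁻¹
    ∨ (∃ (h : 0 < n - 1) (j : Fin (p - 1)),
        r = (sg ⟨0, h⟩)⁻¹ * zg j * (sg ⟨0, h⟩)⁻¹ * zg j *
          (zg j * (sg ⟨0, h⟩)⁻¹ * zg j * (sg ⟨0, h⟩)⁻¹)⁻¹)}

/-- The generator `σ_{i+1}` of `G(n,g,p)`. -/
def S {n g p : ℕ} (i : Fin (n - 1)) : PresentedGroup (gRels n g p) :=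
  PresentedGroup.of (GGen.s i)

/-- The generator `a_{r+1}` of `G(n,g,p)`. -/
def A {n g p : ℕ} (r : Fin g) : PresentedGroup (gRels n g p) :=
  PresentedGroup.of (GGen.a r)

/-- The generator `b_{r+1}` of `G(n,g,p)`. -/
def B {n g p : ℕ} (r : Fin g) : PresentedGroup (gRels n g p) :=
  PresentedGroup.of (GGen.b r)

/-- The generator `z_{j+1}` of `G(n,g,p)`. -/
def Z {n g p : ℕ} (j : Fin (p - 1)) : PresentedGroup (gRels n g p) :=
  PresentedGroup.of (GGen.z j)

/-- The descending product `σ_{n-1} σ_{n-2} ⋯ σ_{j+2}` (1-based indices), i.e. the product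
of all `σ` with index strictly greater than that of `S j`, in decreasing order. -/
def descProd {n g p : ℕ} (j : Fin (n - 1)) : PresentedGroup (gRels n g p) :=
  ((List.ofFn fun i : Fin (n - 1) => if (j : ℕ) < (i : ℕ) then S i else 1).reverse).prod

/-- `τ_{j+1} = σ_{n-1} ⋯ σ_{j+2} σ_{j+1}² σ_{j+2}⁻¹ ⋯ σ_{n-1}⁻¹` (1-based indices). -/
def tau {n g p : ℕ} (j : Fin (n - 1)) : PresentedGroup (gRels n g p) :=
  descProd j * (S j) ^ 2 * (descProd j)⁻¹

/-- The ascending product `σ_1 σ_2 ⋯ σ_{n-1}`. -/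
def uProd (n g p : ℕ) : PresentedGroup (gRels n g p) :=
  (List.ofFn fun i : Fin (n - 1) => S i).prod

/-- `ω_{2r-1} = σ_{n-1}⁻¹ ⋯ σ_1⁻¹ a_r σ_1 ⋯ σ_{n-1}` (1-based index `r`). -/
def omegaA {n g p : ℕ} (r : Fin g) : PresentedGroup (gRels n g p) :=
  (uProd n g p)⁻¹ * A r * uProd n g p

/-- `ω_{2r} = σ_{n-1}⁻¹ ⋯ σ_1⁻¹ b_r σ_1 ⋯ σ_{n-1}` (1-based index `r`). -/
def omegaB {n g p : ℕ} (r : Fin g) : PresentedGroup (gRels n g p) :=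
  (uProd n g p)⁻¹ * B r * uProd n g p

/-- `ζ_j = σ_{n-1}⁻¹ ⋯ σ_1⁻¹ z_j σ_1 ⋯ σ_{n-1}` (1-based index `j`). -/
def zeta {n g p : ℕ} (j : Fin (p - 1)) : PresentedGroup (gRels n g p) :=
  (uProd n g p)⁻¹ * Z j * uProd n g p

/-- The list `[σ_2, σ_3, …, σ_{n-1}]` (with harmless `1`s in place of excluded entries). -/
def tailList (n g p : ℕ) : List (PresentedGroup (gRels n g p)) :=
  List.ofFn fun i : Fin (n - 1) => if 0 < (i : ℕ) then S i else 1

/-- `β = σ_{n-1} ⋯ σ_2 σ_1² σ_2 ⋯ σ_{n-1}`. -/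
def betaElt (n g p : ℕ) (h : 0 < n - 1) : PresentedGroup (gRels n g p) :=
  ((tailList n g p).reverse).prod * (S ⟨0, h⟩) ^ 2 * (tailList n g p).prod

/-- `γ = σ_{n-1}⁻¹ ⋯ σ_2⁻¹ σ_1² σ_2 ⋯ σ_{n-1}`. -/
def gammaElt (n g p : ℕ) (h : 0 < n - 1) : PresentedGroup (gRels n g p) :=
  ((tailList n g p).prod)⁻¹ * (S ⟨0, h⟩) ^ 2 * (tailList n g p).prod

lemma List.prod_ofFn_eq_head_mul {M : Type*} [Monoid M] {m : ℕ} (f : Fin m → M) (h : 0 < m) :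
    (List.ofFn f).prod = f ⟨0, h⟩ * (List.ofFn fun i => if 0 < (i : ℕ) then f i else 1).prod := by
  obtain ⟨k, rfl⟩ : ∃ k, m = k + 1 := ⟨m - 1, by omega⟩
  simp [List.ofFn_succ, Fin.succ_pos]

section GroupIdentities

variable {G : Type*} [Group G]

/-- The relation says exactly that `v = s⁻¹ x s⁻¹ x s⁻¹` commutes with `s`; then `x s² x⁻¹` is
the conjugate of `v s² v⁻¹ = s²` by `s x⁻¹ s`. -/
lemma mul_sq_mul_inv_eq {s x : G} (h : s⁻¹ * x * s⁻¹ * x = x * s⁻¹ * x * s⁻¹) :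
    x * s ^ 2 * x⁻¹ = s * x⁻¹ * s ^ 2 * x * s⁻¹ := by
  have hv : Commute s (s⁻¹ * x * s⁻¹ * x * s⁻¹) :=
    calc s * (s⁻¹ * x * s⁻¹ * x * s⁻¹) = x * s⁻¹ * x * s⁻¹ := by group
      _ = s⁻¹ * x * s⁻¹ * x := h.symm
      _ = (s⁻¹ * x * s⁻¹ * x * s⁻¹) * s := by group
  calc x * s ^ 2 * x⁻¹
      = s * x⁻¹ * s * ((s⁻¹ * x * s⁻¹ * x * s⁻¹) * s ^ 2) *
          (s⁻¹ * x * s⁻¹ * x * s⁻¹)⁻¹ * s⁻¹ * x * s⁻¹ := by group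
    _ = s * x⁻¹ * s * (s ^ 2 * (s⁻¹ * x * s⁻¹ * x * s⁻¹)) *
          (s⁻¹ * x * s⁻¹ * x * s⁻¹)⁻¹ * s⁻¹ * x * s⁻¹ := by rw [(hv.pow_left 2).eq]
    _ = s * x⁻¹ * s ^ 2 * x * s⁻¹ := by group

lemma mul_conj_sq_mul_inv_eq {s x R U : G} (hxR : Commute x R)
    (h : s⁻¹ * x * s⁻¹ * x = x * s⁻¹ * x * s⁻¹) :
    x * (R * s ^ 2 * R⁻¹) * x⁻¹ =
      (R * s ^ 2 * U * ((s * U)⁻¹ * x * (s * U))⁻¹) * (U⁻¹ * s ^ 2 * U) *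
        (R * s ^ 2 * U * ((s * U)⁻¹ * x * (s * U))⁻¹)⁻¹ := by
  calc x * (R * s ^ 2 * R⁻¹) * x⁻¹
      = (x * R) * s ^ 2 * (x * R)⁻¹ := by group
    _ = R * (x * s ^ 2 * x⁻¹) * R⁻¹ := by rw [hxR.eq]; group
    _ = R * (s * x⁻¹ * s ^ 2 * x * s⁻¹) * R⁻¹ := by rw [mul_sq_mul_inv_eq h]
    _ = _ := by group

end GroupIdentities

section SurfaceGenerators

variable {n g p : ℕ}

lemma commute_hgen_S (c : Bool) (t : Fin g) {i : Fin (n - 1)} (hi : (i : ℕ) ≠ 0) :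
    Commute (PresentedGroup.mk (gRels n g p) (hgen c t)) (S i) := by
  have := PresentedGroup.mk_eq_mk_of_mul_inv_mem (rels := gRels n g p)
    (Or.inr (Or.inr (Or.inl ⟨c, t, i, hi, rfl⟩)))
  simp only [map_mul] at this
  exact this

lemma S_zero_inv_mul_hgen_mul_S_zero_inv_mul_hgen (h : 0 < n - 1) (c : Bool) (t : Fin g) :
    (S ⟨0, h⟩)⁻¹ * PresentedGroup.mk (gRels n g p) (hgen c t) * (S ⟨0, h⟩)⁻¹ *
        PresentedGroup.mk (gRels n g p) (hgen c t) =
      PresentedGroup.mk (gRels n g p) (hgen c t) * (S ⟨0, h⟩)⁻¹ *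
        PresentedGroup.mk (gRels n g p) (hgen c t) * (S ⟨0, h⟩)⁻¹ := by
  have := PresentedGroup.mk_eq_mk_of_mul_inv_mem (rels := gRels n g p)
    (Or.inr (Or.inr (Or.inr (Or.inl ⟨h, c, t, rfl⟩))))
  simp only [map_mul, map_inv] at this
  exact this

lemma commute_prod_of_subset_tailList {x : PresentedGroup (gRels n g p)}
    (hx : ∀ i : Fin (n - 1), (i : ℕ) ≠ 0 → Commute x (S i))
    {l : List (PresentedGroup (gRels n g p))} (hl : l ⊆ tailList n g p) :
    Commute x l.prod := by
  refine Commute.list_prod_right _ _ fun y hy => ?_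
  obtain ⟨i, rfl⟩ := List.mem_ofFn.mp (hl hy)
  split_ifs with hi
  · exact hx i hi.ne'
  · exact Commute.one_right x

lemma hgen_mul_tau_zero_mul_inv (h : 0 < n - 1) (c : Bool) (r : Fin g) :
    PresentedGroup.mk (gRels n g p) (hgen c r) * tau ⟨0, h⟩ *
        (PresentedGroup.mk (gRels n g p) (hgen c r))⁻¹ =
      (betaElt n g p h * ((uProd n g p)⁻¹ * PresentedGroup.mk _ (hgen c r) * uProd n g p)⁻¹) *
        gammaElt n g p h *
        (betaElt n g p h * ((uProd n g p)⁻¹ * PresentedGroup.mk _ (hgen c r) * uProd n g p)⁻¹)⁻¹ := by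
  rw [uProd, List.prod_ofFn_eq_head_mul _ h]
  exact mul_conj_sq_mul_inv_eq
    (commute_prod_of_subset_tailList (fun _ hi => commute_hgen_S c r hi)
      (List.reverse_subset.2 (List.Subset.refl _)))
    (S_zero_inv_mul_hgen_mul_S_zero_inv_mul_hgen h c r)

end SurfaceGenerators

theorem conj_tau_one_general (n g p : ℕ) (h : 0 < n - 1) (r : Fin g) :
    A r * tau (⟨0, h⟩ : Fin (n - 1)) * (A r)⁻¹ =
      (betaElt n g p h * (omegaA r)⁻¹) * gammaElt n g p h *
        (betaElt n g p h * (omegaA r)⁻¹)⁻¹ ∧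
    B r * tau (⟨0, h⟩ : Fin (n - 1)) * (B r)⁻¹ =
      (betaElt n g p h * (omegaB r)⁻¹) * gammaElt n g p h *
        (betaElt n g p h * (omegaB r)⁻¹)⁻¹ :=
  ⟨hgen_mul_tau_zero_mul_inv h true r, hgen_mul_tau_zero_mul_inv h false r⟩

/-- **Conjugates of `τ_1` by the surface generators (Lemma 3.1):** in `G(n,g,p)`,
`a_r τ_1 a_r⁻¹ = (β ω_{2r-1}⁻¹) γ (β ω_{2r-1}⁻¹)⁻¹` and
`b_r τ_1 b_r⁻¹ = (β ω_{2r}⁻¹) γ (β ω_{2r}⁻¹)⁻¹`. -/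
theorem conj_tau_one (n g p : ℕ) (hn : 2 ≤ n) (hg : 1 ≤ g) (hp : 1 ≤ p)
    (h : 0 < n - 1) (r : Fin g) :
    A r * tau (⟨0, h⟩ : Fin (n - 1)) * (A r)⁻¹ =
      (betaElt n g p h * (omegaA r)⁻¹) * gammaElt n g p h *
        (betaElt n g p h * (omegaA r)⁻¹)⁻¹ ∧
    B r * tau (⟨0, h⟩ : Fin (n - 1)) * (B r)⁻¹ =
      (betaElt n g p h * (omegaB r)⁻¹) * gammaElt n g p h *
        (betaElt n g p h * (omegaB r)⁻¹)⁻¹ :=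
  conj_tau_one_general n g p h r
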